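/- Let X be a nonempty set and let ψ : X × [0,+∞) → ℝ^n be c.u.d. mod 1 on X. Then for every box I ⊆ [0,1)^n there exists k₀ ∈ ℕ such that for every integer k ≥ k₀ and every x ∈ X, vol₁({t ∈ [2^k, 2^{k+1}) : {ψ(x,t)} ∈ I}) ≥ 2^{k−1}·vol_n(I). -/

import Mathlib

open MeasureTheory Filter Set

/-- A box in `[0,1)^n`: a product of intervals contained in `[0,1)`, each with
nonempty interior. -/
def IsBox {n : ℕ} (I : Set (Fin n → ℝ)) : Prop :=
  ∃ J : Fin n → Set ℝ,
    (∀ i, J i ⊆ Set.Ico (0 : ℝ) 1) ∧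
    (∀ i, (J i).OrdConnected) ∧
    (∀ i, (interior (J i)).Nonempty) ∧
    I = Set.univ.pi J

/-- `ψ : X × [0,∞) → ℝ^n` is continuously uniformly distributed modulo 1 on `X`:
for every box `I ⊆ [0,1)^n`, `vol₁({t ∈ [0,T] : {ψ(x,t)} ∈ I}) / T → vol_n(I)`
as `T → +∞`, uniformly in `x ∈ X`. -/
def IsCudModOneOn {X : Type*} {n : ℕ} (ψ : X → ℝ → Fin n → ℝ) : Prop :=
  ∀ I : Set (Fin n → ℝ), IsBox I →
    TendstoUniformly
      (fun (T : ℝ) (x : X) =>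
        (volume {t : ℝ | t ∈ Set.Icc (0 : ℝ) T ∧ (fun i => Int.fract (ψ x t i)) ∈ I}).toReal / T)
      (fun _ => (volume I).toReal) atTop

theorem stmt8 {X : Type*} [Nonempty X] {n : ℕ} (ψ : X → ℝ → Fin n → ℝ)
    (hmeas : ∀ x : X, Measurable (ψ x)) (hcud : IsCudModOneOn ψ)
    (I : Set (Fin n → ℝ)) (hI : IsBox I) :
    ∃ k₀ : ℕ, ∀ k : ℕ, k₀ ≤ k → ∀ x : X,
      ENNReal.ofReal ((2 : ℝ) ^ ((k : ℤ) - 1)) * volume I ≤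
        volume {t : ℝ | t ∈ Set.Ico ((2 : ℝ) ^ k) ((2 : ℝ) ^ (k + 1)) ∧
          (fun i => Int.fract (ψ x t i)) ∈ I} := by
  have hIfin : volume I ≤ 1 := by
    obtain ⟨J, hJsub, -, -, hIeq⟩ := hI
    calc volume I ≤ volume (Set.univ.pi fun _ : Fin n => Set.Ico (0:ℝ) 1) := by
          apply measure_mono
          rw [hIeq]
          exact Set.pi_mono fun i _ => hJsub i
      _ = 1 := by
          rw [volume_pi_pi]
          simp
  have hIne : volume I ≠ ⊤ := (lt_of_le_of_lt hIfin ENNReal.one_lt_top).ne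
  set v := (volume I).toReal with hv
  have hvol : volume I = ENNReal.ofReal v := (ENNReal.ofReal_toReal hIne).symm
  rcases eq_or_lt_of_le (ENNReal.toReal_nonneg (a := volume I)) with h0 | hvpos
  · refine ⟨0, fun k _ x => ?_⟩
    have hz : volume I = 0 := by rw [hvol, hv.trans h0.symm, ENNReal.ofReal_zero]
    rw [hz, mul_zero]
    exact zero_le
  · have hv6 : 0 < v / 6 := by linarith
    have hev := (Metric.tendstoUniformly_iff.mp (hcud I hI)) (v/6) hv6
    rw [Filter.eventually_atTop] at hev
    obtain ⟨N, hN⟩ := hev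
    obtain ⟨m, hm⟩ := exists_nat_gt N
    refine ⟨m, fun k hk x => ?_⟩
    have h2k : N ≤ (2:ℝ) ^ k := by
      have h1 : (m:ℝ) ≤ 2 ^ m := by exact_mod_cast (Nat.lt_two_pow_self (n := m)).le
      have h2 : (2:ℝ) ^ m ≤ 2 ^ k := pow_le_pow_right₀ one_le_two hk
      linarith
    have h2k1 : N ≤ (2:ℝ) ^ (k+1) :=
      le_trans h2k (pow_le_pow_right₀ one_le_two (Nat.le_succ k))
    set P : ℝ → Prop := fun t => (fun i => Int.fract (ψ x t i)) ∈ I with hP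
    set Ab := volume {t : ℝ | t ∈ Set.Icc (0:ℝ) (2^(k+1)) ∧ P t} with hAb
    set As := volume {t : ℝ | t ∈ Set.Icc (0:ℝ) (2^k) ∧ P t} with hAs
    set S := {t : ℝ | t ∈ Set.Ico ((2:ℝ)^k) ((2:ℝ)^(k+1)) ∧ P t} with hSdef
    have hpos : (0:ℝ) < 2 ^ k := by positivity
    have hpos1 : (0:ℝ) < 2 ^ (k+1) := by positivity
    have hAbfin : Ab ≠ ⊤ := by
      refine (lt_of_le_of_lt (measure_mono fun t ht => ht.1) ?_).ne
      rw [Real.volume_Icc]; exact ENNReal.ofReal_lt_top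
    have hAsfin : As ≠ ⊤ := by
      refine (lt_of_le_of_lt (measure_mono fun t ht => ht.1) ?_).ne
      rw [Real.volume_Icc]; exact ENNReal.ofReal_lt_top
    have hb := hN (2^(k+1)) h2k1 x
    have hs := hN (2^k) h2k x
    rw [Real.dist_eq, abs_lt] at hb hs
    have hbig : ENNReal.ofReal ((v - v/6) * 2^(k+1)) ≤ Ab := by
      rw [← ENNReal.ofReal_toReal hAbfin]
      apply ENNReal.ofReal_le_ofReal
      have h' : v - v/6 < Ab.toReal / 2^(k+1) := by
        have := hb.2; linarith
      calc (v - v/6) * 2^(k+1) ≤ (Ab.toReal / 2^(k+1)) * 2^(k+1) :=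
            mul_le_mul_of_nonneg_right h'.le hpos1.le
        _ = Ab.toReal := by field_simp
    have hsmall : As ≤ ENNReal.ofReal ((v + v/6) * 2^k) := by
      rw [← ENNReal.ofReal_toReal hAsfin]
      apply ENNReal.ofReal_le_ofReal
      have h' : As.toReal / 2^k < v + v/6 := by
        have := hs.1; linarith
      calc As.toReal = (As.toReal / 2^k) * 2^k := by field_simp
        _ ≤ (v + v/6) * 2^k := mul_le_mul_of_nonneg_right h'.le hpos.le
    have hsub : Ab ≤ As + volume S := by
      have hsubset : {t : ℝ | t ∈ Set.Icc (0:ℝ) (2^(k+1)) ∧ P t} ⊆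
          ({t : ℝ | t ∈ Set.Icc (0:ℝ) (2^k) ∧ P t} ∪ S) ∪ {(2:ℝ)^(k+1)} := by
        rintro t ⟨⟨h0t, ht1⟩, hPt⟩
        rcases le_or_gt t (2^k) with h | h
        · exact Or.inl (Or.inl ⟨⟨h0t, h⟩, hPt⟩)
        · rcases lt_or_eq_of_le ht1 with h' | h'
          · exact Or.inl (Or.inr ⟨⟨h.le, h'⟩, hPt⟩)
          · exact Or.inr h'
      calc Ab ≤ volume (({t : ℝ | t ∈ Set.Icc (0:ℝ) (2^k) ∧ P t} ∪ S) ∪ {(2:ℝ)^(k+1)}) :=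
            measure_mono hsubset
        _ ≤ volume ({t : ℝ | t ∈ Set.Icc (0:ℝ) (2^k) ∧ P t} ∪ S) + volume {(2:ℝ)^(k+1)} :=
            measure_union_le _ _
        _ = volume ({t : ℝ | t ∈ Set.Icc (0:ℝ) (2^k) ∧ P t} ∪ S) := by
            rw [Real.volume_singleton, add_zero]
        _ ≤ As + volume S := measure_union_le _ _
    have hz : (2:ℝ)^((k:ℤ)-1) = 2^k / 2 := by
      rw [zpow_sub₀ (two_ne_zero), zpow_one, zpow_natCast]
    have hreal : (2:ℝ)^((k:ℤ)-1) * v + (v + v/6) * 2^k ≤ (v - v/6) * 2^(k+1) := by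
      rw [hz, pow_succ]
      ring_nf
      nlinarith [hpos]
    have key : ENNReal.ofReal ((2:ℝ)^((k:ℤ)-1) * v) + As ≤ volume S + As := by
      calc ENNReal.ofReal ((2:ℝ)^((k:ℤ)-1) * v) + As
          ≤ ENNReal.ofReal ((2:ℝ)^((k:ℤ)-1) * v) + ENNReal.ofReal ((v + v/6) * 2^k) :=
            add_le_add_right hsmall _
        _ = ENNReal.ofReal ((2:ℝ)^((k:ℤ)-1) * v + (v + v/6) * 2^k) := by
            rw [← ENNReal.ofReal_add (by positivity) (by positivity)]
        _ ≤ ENNReal.ofReal ((v - v/6) * 2^(k+1)) := ENNReal.ofReal_le_ofReal hreal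
        _ ≤ Ab := hbig
        _ ≤ As + volume S := hsub
        _ = volume S + As := add_comm _ _
    have hfinal : ENNReal.ofReal ((2:ℝ)^((k:ℤ)-1) * v) ≤ volume S :=
      (ENNReal.add_le_add_iff_right hAsfin).mp key
    rw [hvol, ← ENNReal.ofReal_mul (by positivity)]
    exact hfinal
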